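/- For either of the two tensor families of the Airy curve (the Eynard–Orantin tensors or the modified residue-constraint tensors), the recursively defined numbers vanish unless all indices are odd: S_{g,n; i₁,…,i_n} = 0 whenever some index i_m is even. -/

import Mathlib

namespace Airy

/-- The tensor `A` of the Airy curve: `a_{111} = 1/4`, all other components `0`. -/
noncomputable def aT (i j l : ℕ+) : ℂ := if i = 1 ∧ j = 1 ∧ l = 1 then 1/4 else 0

/-- The tensor `ε` of the Airy curve: `ε₃ = 1/16`, all other components `0`. -/
noncomputable def epsT (i : ℕ+) : ℂ := if i = 3 then 1/16 else 0

/-- The Eynard–Orantin `B`-tensor of the Airy curve. -/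
noncomputable def bTR (i j l : ℕ+) : ℂ :=
  if Odd (i : ℕ) ∧ (i : ℕ) + (j : ℕ) = (l : ℕ) + 3 then
    (1/4) * (-1 : ℂ) ^ ((j : ℕ) + 1) * (j : ℕ) else 0

/-- The Eynard–Orantin `C`-tensor of the Airy curve. -/
noncomputable def cTR (i j l : ℕ+) : ℂ :=
  if Even ((j : ℕ) + (l : ℕ)) ∧ (i : ℕ) = (j : ℕ) + (l : ℕ) + 3 then
    (1/4) * (-1 : ℂ) ^ ((l : ℕ) + 1) else 0

/-- The modified (residue-constraint) `B`-tensor of the Airy curve. -/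
noncomputable def bM (i j l : ℕ+) : ℂ :=
  if Odd (i : ℕ) ∧ (i : ℕ) + (j : ℕ) = (l : ℕ) + 3 then (1/4) * (j : ℕ) else 0

/-- The modified (residue-constraint) `C`-tensor of the Airy curve. -/
noncomputable def cM (i j l : ℕ+) : ℂ :=
  if Even ((j : ℕ) + (l : ℕ)) ∧ (i : ℕ) = (j : ℕ) + (l : ℕ) + 3 then 1/4 else 0

/-- `S_{g',n'}` with the convention that it is interpreted as `0` when `n' = 0` or
(`g' = 0` and `n' ≤ 2`). -/
noncomputable def SE (S : ℕ → List ℕ+ → ℂ) (g : ℕ) (l : List ℕ+) : ℂ :=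
  if l.length = 0 ∨ (g = 0 ∧ l.length ≤ 2) then 0 else S g l

/-- The subsequence of a list indexed by a set `J` of positions. -/
def subseq {α : Type*} (l : List α) (J : Finset (Fin l.length)) : List α :=
  ((List.finRange l.length).filter (fun p => p ∈ J)).map l.get

/-- `S` is defined by the abstract topological recursion from the tensors `(aT, b, c, epsT)`. -/
def Recur (b c : ℕ+ → ℕ+ → ℕ+ → ℂ) (S : ℕ → List ℕ+ → ℂ) : Prop :=
  (∀ i j l : ℕ+, S 0 [i, j, l] = 2 * aT i j l) ∧
  (∀ i : ℕ+, S 1 [i] = epsT i) ∧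
  (∀ g n : ℕ, ((g = 0 ∧ 4 ≤ n) ∨ (g = 1 ∧ 2 ≤ n) ∨ (2 ≤ g ∧ 1 ≤ n)) →
    ∀ (i : ℕ+) (t : List ℕ+), t.length = n - 1 →
      S g (i :: t)
        = 2 * (∑ α : Fin t.length, ∑ᶠ l : ℕ+,
            b i (t.get α) l * SE S g (l :: t.eraseIdx α))
        + (∑ g₁ ∈ Finset.range (g + 1), ∑ J : Finset (Fin t.length), ∑ᶠ j : ℕ+, ∑ᶠ l : ℕ+,
            c i j l * SE S g₁ (j :: subseq t J) * SE S (g - g₁) (l :: subseq t Jᶜ))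
        + (if g = 0 then 0 else
            ∑ᶠ j : ℕ+, ∑ᶠ l : ℕ+, c i j l * SE S (g - 1) (j :: l :: t)))

lemma exists_mem_cons_eraseIdx {α : Type*} {p : α → Prop} {t : List α} {k : Fin t.length}
    {a : α} (hpa : p (t.get k) → p a) (h : ∃ x ∈ t, p x) : ∃ x ∈ a :: t.eraseIdx k, p x := by
  obtain ⟨x, hxt, hpx⟩ := h
  obtain ⟨m, rfl⟩ := List.get_of_mem hxt
  by_cases hmk : m = k
  · exact ⟨a, List.mem_cons_self, hpa (hmk ▸ hpx)⟩
  · refine ⟨t.get m, List.mem_cons_of_mem _ ?_, hpx⟩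
    exact List.mem_eraseIdx_iff_getElem.mpr ⟨m, m.isLt, fun h => hmk (Fin.ext h), rfl⟩

lemma mem_subseq_or_mem_subseq_compl {α : Type*} {t : List α} (J : Finset (Fin t.length))
    {x : α} (hx : x ∈ t) : x ∈ subseq t J ∨ x ∈ subseq t Jᶜ := by
  obtain ⟨m, rfl⟩ := List.get_of_mem hx
  by_cases hm : m ∈ J
  · exact .inl (List.mem_map.mpr ⟨m, by simp [hm], rfl⟩)
  · exact .inr (List.mem_map.mpr ⟨m, by simp [hm], rfl⟩)

lemma length_subseq_add_length_subseq_compl {α : Type*} (t : List α)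
    (J : Finset (Fin t.length)) : (subseq t J).length + (subseq t Jᶜ).length = t.length := by
  have h := (List.finRange t.length).length_eq_length_filter_add (· ∈ J)
  simp only [List.length_finRange] at h
  simpa [subseq, Finset.mem_compl] using h.symm

/-- The only feature of the Airy tensors that the vanishing result needs. -/
structure IsParityAdapted (b c : ℕ+ → ℕ+ → ℕ+ → ℂ) : Prop where
  b_support : ∀ i j l, b i j l ≠ 0 → Odd (i : ℕ) ∧ Even ((j : ℕ) + l)
  c_support : ∀ i j l, c i j l ≠ 0 → Odd (i : ℕ)

lemma isParityAdapted_of_support {b c : ℕ+ → ℕ+ → ℕ+ → ℂ}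
    (hb : ∀ i j l, b i j l ≠ 0 → Odd (i : ℕ) ∧ (i : ℕ) + j = l + 3)
    (hc : ∀ i j l, c i j l ≠ 0 → Even ((j : ℕ) + l) ∧ (i : ℕ) = j + l + 3) :
    IsParityAdapted b c where
  b_support i j l h := by
    obtain ⟨hi, hsum⟩ := hb i j l h
    refine ⟨hi, ?_⟩
    rw [Nat.odd_iff] at hi
    rw [Nat.even_iff]
    omega
  c_support i j l h := by
    obtain ⟨hev, hi⟩ := hc i j l h
    exact hi ▸ hev.add_odd (by decide)

lemma isParityAdapted_bTR_cTR : IsParityAdapted bTR cTR :=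
  isParityAdapted_of_support (fun _ _ _ h => (ite_ne_right_iff.mp h).1)
    (fun _ _ _ h => (ite_ne_right_iff.mp h).1)

lemma isParityAdapted_bM_cM : IsParityAdapted bM cM :=
  isParityAdapted_of_support (fun _ _ _ h => (ite_ne_right_iff.mp h).1)
    (fun _ _ _ h => (ite_ne_right_iff.mp h).1)

lemma aT_eq_zero_of_even_mem {i j l : ℕ+} (h : ∃ x ∈ [i, j, l], Even (x : ℕ)) : aT i j l = 0 := by
  refine if_neg ?_
  rintro ⟨rfl, rfl, rfl⟩
  obtain ⟨x, hx, hxe⟩ := h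
  simp only [List.mem_cons, List.not_mem_nil, or_self, or_false] at hx
  simp [hx] at hxe

lemma epsT_eq_zero_of_even {i : ℕ+} (h : Even (i : ℕ)) : epsT i = 0 := by
  refine if_neg ?_
  rintro rfl
  exact absurd h (by decide)

section Vanishing

variable {b c : ℕ+ → ℕ+ → ℕ+ → ℂ} {S : ℕ → List ℕ+ → ℂ}

lemma SE_eq_zero_of_le_two {g : ℕ} {l : List ℕ+} (h : 2 * g + l.length ≤ 2) : SE S g l = 0 :=
  if_pos (by omega)

lemma SE_eq_of_stable {g : ℕ} {l : List ℕ+}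
    (h : (g = 0 ∧ 3 ≤ l.length) ∨ (1 ≤ g ∧ 1 ≤ l.length)) : SE S g l = S g l :=
  if_neg (by omega)

def VanishesBelow (S : ℕ → List ℕ+ → ℂ) (m : ℕ) : Prop :=
  ∀ g (l : List ℕ+), 2 * g + l.length < m → (∃ x ∈ l, Even (x : ℕ)) → SE S g l = 0

/-- If the factor carrying the even entry has full weight, the other one is unstable. -/
lemma VanishesBelow.SE_mul_SE_eq_zero {m g₁ g₂ : ℕ} {A B : List ℕ+} (hS : VanishesBelow S m)
    (hsize : 2 * g₁ + A.length + (2 * g₂ + B.length) ≤ m + 2)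
    (h : (∃ x ∈ A, Even (x : ℕ)) ∨ (∃ x ∈ B, Even (x : ℕ))) :
    SE S g₁ A * SE S g₂ B = 0 := by
  rcases h with hA | hB
  · by_cases hlt : 2 * g₁ + A.length < m
    · rw [hS g₁ A hlt hA, zero_mul]
    · rw [SE_eq_zero_of_le_two (g := g₂) (l := B) (by omega), mul_zero]
  · by_cases hlt : 2 * g₂ + B.length < m
    · rw [hS g₂ B hlt hB, mul_zero]
    · rw [SE_eq_zero_of_le_two (g := g₁) (l := A) (by omega), zero_mul]

variable {g : ℕ} {i : ℕ+} {t : List ℕ+}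

lemma exists_even_mem_tail (hi : Odd (i : ℕ)) (h : ∃ x ∈ i :: t, Even (x : ℕ)) :
    ∃ x ∈ t, Even (x : ℕ) := by
  obtain ⟨x, hx, hxe⟩ := h
  rcases List.mem_cons.mp hx with rfl | hxt
  · exact absurd hi (Nat.not_odd_iff_even.mpr hxe)
  · exact ⟨x, hxt, hxe⟩

variable (hbc : IsParityAdapted b c) (hS : VanishesBelow S (2 * g + t.length + 1))
  (heven : ∃ x ∈ i :: t, Even (x : ℕ))
include hbc hS heven

lemma b_mul_SE_eq_zero (k : Fin t.length) (l : ℕ+) :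
    b i (t.get k) l * SE S g (l :: t.eraseIdx k) = 0 := by
  by_cases hb0 : b i (t.get k) l = 0
  · rw [hb0, zero_mul]
  obtain ⟨hi, hpar⟩ := hbc.b_support _ _ _ hb0
  have hlen : (t.eraseIdx k).length = t.length - 1 := List.length_eraseIdx_of_lt k.isLt
  refine mul_eq_zero_of_right _ (hS g _ ?_ ?_)
  · simp only [List.length_cons, hlen]
    have := k.isLt
    omega
  · exact exists_mem_cons_eraseIdx (Nat.even_add.mp hpar).mp
      (exists_even_mem_tail hi heven)

lemma c_mul_SE_mul_SE_eq_zero {g₁ : ℕ} (hg₁ : g₁ ≤ g) (J : Finset (Fin t.length)) (j l : ℕ+) :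
    c i j l * SE S g₁ (j :: subseq t J) * SE S (g - g₁) (l :: subseq t Jᶜ) = 0 := by
  by_cases hc0 : c i j l = 0
  · rw [hc0, zero_mul, zero_mul]
  obtain ⟨x, hxt, hxe⟩ := exists_even_mem_tail (hbc.c_support _ _ _ hc0) heven
  rw [mul_assoc]
  refine mul_eq_zero_of_right _ (hS.SE_mul_SE_eq_zero ?_ ?_)
  · have := length_subseq_add_length_subseq_compl t J
    simp only [List.length_cons]
    omega
  · rcases mem_subseq_or_mem_subseq_compl J hxt with hx | hx
    · exact .inl ⟨x, List.mem_cons_of_mem _ hx, hxe⟩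
    · exact .inr ⟨x, List.mem_cons_of_mem _ hx, hxe⟩

lemma c_mul_SE_genus_reduction_eq_zero (hg : 1 ≤ g) (j l : ℕ+) :
    c i j l * SE S (g - 1) (j :: l :: t) = 0 := by
  by_cases hc0 : c i j l = 0
  · rw [hc0, zero_mul]
  obtain ⟨x, hxt, hxe⟩ := exists_even_mem_tail (hbc.c_support _ _ _ hc0) heven
  refine mul_eq_zero_of_right _ (hS _ _ ?_ ⟨x, by simp [hxt], hxe⟩)
  simp only [List.length_cons]
  omega

end Vanishing

/-- Strong induction on `2 g + n`: an even first index kills every coefficient `b i _ _`,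
`c i _ _`, and an even later index is carried, by `b` (which preserves parity) or by `c`, into a
factor of smaller weight. Stating it for `SE` rather than `S` makes the unstable terms of the
recursion vanish for free. -/
theorem SE_eq_zero_of_even_mem {b c : ℕ+ → ℕ+ → ℕ+ → ℂ} {S : ℕ → List ℕ+ → ℂ}
    (hbc : IsParityAdapted b c) (hS : Recur b c S) (g : ℕ) (l : List ℕ+)
    (heven : ∃ x ∈ l, Even (x : ℕ)) : SE S g l = 0 := by
  obtain ⟨hS₀₃, hS₁₁, hrec⟩ := hS
  induction hm : 2 * g + l.length using Nat.strong_induction_on generalizing g l with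
  | _ m IH =>
  have hbelow : VanishesBelow S m := fun g' l' hlt heven' => IH _ hlt g' l' heven' rfl
  subst hm
  by_cases hstable : (g = 0 ∧ 3 ≤ l.length) ∨ (1 ≤ g ∧ 1 ≤ l.length)
  swap
  · exact if_pos (by omega)
  rw [SE_eq_of_stable hstable]
  obtain ⟨i, t, rfl⟩ := List.exists_cons_of_length_pos (by omega : 0 < l.length)
  simp only [List.length_cons] at hstable hbelow
  by_cases h₀₃ : g = 0 ∧ t.length = 2
  · obtain ⟨rfl, ht⟩ := h₀₃
    obtain ⟨j, k, rfl⟩ := List.length_eq_two.mp ht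
    rw [hS₀₃, aT_eq_zero_of_even_mem heven, mul_zero]
  by_cases h₁₁ : g = 1 ∧ t = []
  · obtain ⟨rfl, rfl⟩ := h₁₁
    rw [hS₁₁, epsT_eq_zero_of_even (by simpa using heven)]
  rw [← List.length_eq_zero_iff] at h₁₁
  rw [hrec g (t.length + 1) (by omega) i t rfl]
  rw [Finset.sum_eq_zero fun k _ => finsum_eq_zero_of_forall_eq_zero
      (b_mul_SE_eq_zero hbc hbelow heven k),
    Finset.sum_eq_zero fun g₁ hg₁ => Finset.sum_eq_zero fun J _ =>
      finsum_eq_zero_of_forall_eq_zero fun j => finsum_eq_zero_of_forall_eq_zero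
        (c_mul_SE_mul_SE_eq_zero hbc hbelow heven (Nat.lt_succ_iff.mp (Finset.mem_range.mp hg₁))
          J j)]
  split_ifs with hg
  · simp
  · simp [c_mul_SE_genus_reduction_eq_zero hbc hbelow heven (Nat.one_le_iff_ne_zero.mpr hg)]

/-- for either of the two tensor families of the Airy curve, the recursively
defined numbers `S_{g,n; i₁,…,i_n}` vanish whenever some index is even. -/
theorem vanishing_on_even_indices (b c : ℕ+ → ℕ+ → ℕ+ → ℂ)
    (hbc : (b = bTR ∧ c = cTR) ∨ (b = bM ∧ c = cM))
    (S : ℕ → List ℕ+ → ℂ) (hS : Recur b c S) :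
    ∀ (g : ℕ) (l : List ℕ+),
      ((g = 0 ∧ 3 ≤ l.length) ∨ (1 ≤ g ∧ 1 ≤ l.length)) →
      (∃ i ∈ l, Even (i : ℕ)) → S g l = 0 := by
  have hadapted : IsParityAdapted b c := by
    rcases hbc with ⟨rfl, rfl⟩ | ⟨rfl, rfl⟩
    exacts [isParityAdapted_bTR_cTR, isParityAdapted_bM_cM]
  intro g l hstable heven
  rw [← SE_eq_of_stable (S := S) hstable]
  exact SE_eq_zero_of_even_mem hadapted hS g l heven

end Airy
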